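/- arXiv:2511.15631 — 3 statements merged into one kernel-verified Lean document; each statement's English description precedes it below -/
import Mathlib

section
/- Let V : ℝ → ℝ be C¹ on [0,1] with ‖V'‖_{L^∞([0,1])} =: M > 0. Then for all a, b ∈ [0,1] with a ≤ b, (V(b) − V(a))² ≤ 2M · ∫_a^b (V(z) − V(b)) dz. -/
/-! With `W = V - V b ≥ 0` on `[a, b]` and `-M ≤ W'`, the function `-W²` has derivative
`-2 W W' ≤ 2 M W`, so integrating this bound from `a` to `b` gives `W(a)² ≤ 2 M ∫ₐᵇ W`,
since `W(b) = 0`. -/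

open Set intervalIntegral

theorem sq_sub_le_two_mul_integral_sub {f f' : ℝ → ℝ} {a b M : ℝ} (hab : a ≤ b)
    (hcont : ContinuousOn f (Icc a b)) (hderiv : ∀ x ∈ Ioo a b, HasDerivAt f (f' x) x)
    (hge : ∀ x ∈ Ioo a b, f b ≤ f x) (hbound : ∀ x ∈ Ioo a b, -M ≤ f' x) :
    (f b - f a) ^ 2 ≤ 2 * M * ∫ x in a..b, (f x - f b) := by
  have hsq_deriv : ∀ x ∈ Ioo a b,
      HasDerivAt (fun y => -(f y - f b) ^ 2) (-(2 * (f x - f b) * f' x)) x := by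
    intro x hx
    simpa using (((hderiv x hx).sub_const (f b)).fun_pow 2).fun_neg
  have hslope : ∀ x ∈ Ioo a b, -(2 * (f x - f b) * f' x) ≤ 2 * M * (f x - f b) := by
    intro x hx
    nlinarith [hge x hx, hbound x hx]
  have hle := sub_le_integral_of_hasDeriv_right_of_le (g := fun y => -(f y - f b) ^ 2)
    (φ := fun y => 2 * M * (f y - f b)) hab ((hcont.sub continuousOn_const).pow 2).neg
    (fun x hx => (hsq_deriv x hx).hasDerivWithinAt)
    ((continuousOn_const.mul (hcont.sub continuousOn_const)).integrableOn_Icc) hslope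
  rw [integral_const_mul] at hle
  rw [← neg_sub, neg_sq]
  simpa using hle

theorem stmt_4_general (V V' : ℝ → ℝ) (M : ℝ)
    (hderiv : ∀ z ∈ Set.Icc (0:ℝ) 1, HasDerivAt V (V' z) z)
    (hVdec : ∀ z ∈ Set.Icc (0:ℝ) 1, V' z ≤ 0)
    (hbound : ∀ z ∈ Set.Icc (0:ℝ) 1, |V' z| ≤ M) :
    ∀ a ∈ Set.Icc (0:ℝ) 1, ∀ b ∈ Set.Icc (0:ℝ) 1, a ≤ b →
      (V b - V a) ^ 2 ≤ 2 * M * ∫ z in a..b, (V z - V b) := by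
  intro a ha b hb hab
  have hcont : ContinuousOn V (Icc 0 1) := fun z hz =>
    (hderiv z hz).continuousAt.continuousWithinAt
  have hanti : AntitoneOn V (Icc 0 1) :=
    antitoneOn_of_hasDerivWithinAt_nonpos (convex_Icc 0 1) hcont
      (fun x hx => (hderiv x (interior_subset hx)).hasDerivWithinAt)
      (fun x hx => hVdec x (interior_subset hx))
  have hsub : Icc a b ⊆ Icc 0 1 := Icc_subset_Icc ha.1 hb.2
  have hsub' : Ioo a b ⊆ Icc 0 1 := Ioo_subset_Icc_self.trans hsub
  exact sq_sub_le_two_mul_integral_sub hab (hcont.mono hsub)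
    (fun x hx => hderiv x (hsub' hx))
    (fun x hx => hanti (hsub' hx) hb hx.2.le)
    (fun x hx => neg_le_of_abs_le (hbound x (hsub' hx)))

theorem stmt_4 (V V' : ℝ → ℝ) (M : ℝ) (hM : 0 < M)
    (hderiv : ∀ z ∈ Set.Icc (0:ℝ) 1, HasDerivAt V (V' z) z)
    (hcont : ContinuousOn V' (Set.Icc 0 1))
    (hVdec : ∀ z ∈ Set.Icc (0:ℝ) 1, V' z ≤ 0)
    (hbound : ∀ z ∈ Set.Icc (0:ℝ) 1, |V' z| ≤ M) :
    ∀ a ∈ Set.Icc (0:ℝ) 1, ∀ b ∈ Set.Icc (0:ℝ) 1, a ≤ b →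
      (V b - V a) ^ 2 ≤ 2 * M * ∫ z in a..b, (V z - V b) :=
  stmt_4_general V V' M hderiv hVdec hbound
end

section
/- Hardy–Littlewood rearrangement corollary: let h : ℝ → [0,∞) be measurable, integrable, and vanishing at infinity, let F : ℝ → ℝ be non-decreasing with F ≥ 0, and let a ∈ ℝ. If F(h) is integrable, then ∫_ℝ F(h(x))·(h(x) − h(x+a)) dx ≥ 0. -/
open Set MeasureTheory

lemma aux_layer (u v : ℝ → ℝ) (hu : Measurable u) (hv : Measurable v)
    (hu0 : ∀ x, 0 ≤ u x) :
    ∫⁻ x : ℝ, ENNReal.ofReal (u x) * ENNReal.ofReal (v x)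
      = ∫⁻ t in Ioi (0:ℝ), ∫⁻ s in Ioi (0:ℝ),
          volume ({x | s < u x} ∩ {x | t < v x}) := by
  have h1 : ∀ x : ℝ, ENNReal.ofReal (v x)
      = ∫⁻ t in Ioi (0:ℝ), (Iio (v x)).indicator 1 t := by
    intro x
    rw [lintegral_indicator_one measurableSet_Iio, Measure.restrict_apply measurableSet_Iio,
      Iio_inter_Ioi, Real.volume_Ioo]
    simp
  have h2 : ∀ x : ℝ, ENNReal.ofReal (u x) * ENNReal.ofReal (v x)
      = ∫⁻ t in Ioi (0:ℝ), ENNReal.ofReal (u x) * (Iio (v x)).indicator 1 t := by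
    intro x
    rw [lintegral_const_mul _ (measurable_one.indicator measurableSet_Iio), ← h1]
  simp_rw [h2]
  rw [lintegral_lintegral_swap]
  · apply lintegral_congr
    intro t
    have hset : MeasurableSet {x : ℝ | t < v x} := measurableSet_lt measurable_const hv
    have h3 : (fun x => ENNReal.ofReal (u x) * (Iio (v x)).indicator 1 t)
        = fun x => ({x : ℝ | t < v x}).indicator (fun x => ENNReal.ofReal (u x)) x := by
      funext x
      simp only [Set.indicator_apply, mem_Iio, mem_setOf_eq, mul_ite, mul_one, mul_zero,
        Pi.one_apply]
    rw [h3, lintegral_indicator hset,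
      lintegral_eq_lintegral_meas_lt _ (ae_of_all _ hu0) hu.aemeasurable]
    apply lintegral_congr
    intro s
    rw [Measure.restrict_apply (measurableSet_lt measurable_const hu)]
  · have : (Function.uncurry fun (x t : ℝ) =>
        ENNReal.ofReal (u x) * (Iio (v x)).indicator 1 t)
        = fun p : ℝ × ℝ => ENNReal.ofReal (u p.1) *
            (if p.2 < v p.1 then 1 else 0) := by
      funext p
      simp [Function.uncurry, Set.indicator_apply]
    rw [this]
    exact ((hu.comp measurable_fst).ennreal_ofReal.mul
      (Measurable.ite (measurableSet_lt measurable_snd (hv.comp measurable_fst))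
        measurable_const measurable_const)).aemeasurable

lemma aux_inter (h : ℝ → ℝ) (F : ℝ → ℝ) (a s t : ℝ) (hmeas : Measurable h)
    (hFmono : Monotone F) :
    volume ({x | s < F (h x)} ∩ {x | t < h (x + a)})
      ≤ volume ({x | s < F (h x)} ∩ {x | t < h x}) := by
  have htrans : volume {x : ℝ | t < h (x + a)} = volume {x : ℝ | t < h x} := by
    have : {x : ℝ | t < h (x + a)} = (fun x : ℝ => x + a) ⁻¹' {x : ℝ | t < h x} := rfl
    rw [this]
    exact (measurePreserving_add_right volume a).measure_preimage
      (measurableSet_lt measurable_const hmeas).nullMeasurableSet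
  by_cases hc : Ioi t ⊆ {y : ℝ | s < F y}
  · -- {t < h} ⊆ {s < F ∘ h}, so RHS set = {t < h x}
    have hsub : {x : ℝ | t < h x} ⊆ {x | s < F (h x)} := fun x hx => hc hx
    have : {x | s < F (h x)} ∩ {x : ℝ | t < h x} = {x : ℝ | t < h x} :=
      inter_eq_right.mpr hsub
    rw [this, ← htrans]
    exact measure_mono inter_subset_right
  · -- ∃ y > t with F y ≤ s; then {s < F ∘ h} ⊆ {t < h}
    obtain ⟨y, hy, hys⟩ := not_subset.mp hc
    simp only [mem_setOf_eq, not_lt] at hys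
    have hsub : {x : ℝ | s < F (h x)} ⊆ {x : ℝ | t < h x} := by
      intro x hx
      simp only [mem_setOf_eq] at hx ⊢
      by_contra hle
      push_neg at hle
      exact absurd (lt_of_lt_of_le hx (hFmono (le_trans hle (le_of_lt hy)))) (not_lt.mpr hys)
    have : {x | s < F (h x)} ∩ {x : ℝ | t < h x} = {x : ℝ | s < F (h x)} :=
      inter_eq_left.mpr hsub
    rw [this]
    exact measure_mono inter_subset_left

lemma aux_key (h F : ℝ → ℝ) (a : ℝ) (hmeas : Measurable h) (hFmono : Monotone F)
    (hFnonneg : ∀ x, 0 ≤ F x) :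
    ∫⁻ x : ℝ, ENNReal.ofReal (F (h x) * h (x + a))
      ≤ ∫⁻ x : ℝ, ENNReal.ofReal (F (h x) * h x) := by
  have hFm : Measurable F := hFmono.measurable
  have hFh0 : ∀ x, 0 ≤ F (h x) := fun x => hFnonneg _
  have e1 : ∫⁻ x : ℝ, ENNReal.ofReal (F (h x) * h (x + a))
      = ∫⁻ x : ℝ, ENNReal.ofReal (F (h x)) * ENNReal.ofReal (h (x + a)) :=
    lintegral_congr fun x => ENNReal.ofReal_mul (hFh0 x)
  have e2 : ∫⁻ x : ℝ, ENNReal.ofReal (F (h x) * h x)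
      = ∫⁻ x : ℝ, ENNReal.ofReal (F (h x)) * ENNReal.ofReal (h x) :=
    lintegral_congr fun x => ENNReal.ofReal_mul (hFh0 x)
  rw [e1, e2, aux_layer (fun x => F (h x)) (fun x => h (x + a)) (hFm.comp hmeas)
      (hmeas.comp (measurable_add_const a)) hFh0,
    aux_layer (fun x => F (h x)) h (hFm.comp hmeas) hmeas hFh0]
  refine lintegral_mono fun t => lintegral_mono fun s => ?_
  exact aux_inter h F a s t hmeas hFmono

lemma aux_fin (h F : ℝ → ℝ) (a : ℝ)
    (hmeas : Measurable h) (hnonneg : ∀ x, 0 ≤ h x)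
    (hFmono : Monotone F) (hFnonneg : ∀ x, 0 ≤ F x)
    (hfin : ∫⁻ x : ℝ, ENNReal.ofReal (F (h x) * h x) < ⊤) :
    0 ≤ ∫ x : ℝ, F (h x) * (h x - h (x + a)) := by
  have hFm : Measurable F := hFmono.measurable
  have hpm : Measurable fun x => F (h x) * h x := (hFm.comp hmeas).mul hmeas
  have hqm : Measurable fun x => F (h x) * h (x + a) :=
    (hFm.comp hmeas).mul (hmeas.comp (measurable_add_const a))
  have hp0 : ∀ x, 0 ≤ F (h x) * h x := fun x => mul_nonneg (hFnonneg _) (hnonneg _)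
  have hq0 : ∀ x, 0 ≤ F (h x) * h (x + a) := fun x => mul_nonneg (hFnonneg _) (hnonneg _)
  have key := aux_key h F a hmeas hFmono hFnonneg
  have hqfin : ∫⁻ x : ℝ, ENNReal.ofReal (F (h x) * h (x + a)) < ⊤ := lt_of_le_of_lt key hfin
  have hP : Integrable fun x => F (h x) * h x :=
    ⟨hpm.aestronglyMeasurable, (hasFiniteIntegral_iff_ofReal (ae_of_all _ hp0)).mpr hfin⟩
  have hQ : Integrable fun x => F (h x) * h (x + a) :=
    ⟨hqm.aestronglyMeasurable, (hasFiniteIntegral_iff_ofReal (ae_of_all _ hq0)).mpr hqfin⟩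
  have : (fun x => F (h x) * (h x - h (x + a)))
      = fun x => F (h x) * h x - F (h x) * h (x + a) := by
    funext x; ring
  rw [this, integral_sub hP hQ, sub_nonneg,
    integral_eq_lintegral_of_nonneg_ae (ae_of_all _ hq0) hqm.aestronglyMeasurable,
    integral_eq_lintegral_of_nonneg_ae (ae_of_all _ hp0) hpm.aestronglyMeasurable]
  exact ENNReal.toReal_mono hfin.ne key

theorem stmt_6 (h F : ℝ → ℝ) (a : ℝ)
    (hmeas : Measurable h)
    (hnonneg : ∀ x, 0 ≤ h x)
    (hint : Integrable h)
    (hvan : ∀ t : ℝ, 0 < t → volume {x : ℝ | t < h x} < ⊤)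
    (hFmono : Monotone F)
    (hFnonneg : ∀ x, 0 ≤ F x)
    (hFint : Integrable (fun x => F (h x))) :
    0 ≤ ∫ x : ℝ, F (h x) * (h x - h (x + a)) := by
  by_cases hg : Integrable fun x => F (h x) * (h x - h (x + a))
  · -- truncation + dominated convergence
    set g : ℕ → ℝ → ℝ := fun n x => min (F (h x)) (n : ℝ) with hg_def
    have heach : ∀ n : ℕ, 0 ≤ ∫ x : ℝ, min (F (h x)) (n : ℝ) * (h x - h (x + a)) := by
      intro n
      refine aux_fin h (fun y => min (F y) (n : ℝ)) a hmeas hnonneg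
        (hFmono.min monotone_const)
        (fun x => le_min (hFnonneg x) (Nat.cast_nonneg n)) ?_
      calc ∫⁻ x : ℝ, ENNReal.ofReal (min (F (h x)) (n : ℝ) * h x)
          ≤ ∫⁻ x : ℝ, ENNReal.ofReal ((n : ℝ) * h x) :=
            lintegral_mono fun x => ENNReal.ofReal_le_ofReal
              (mul_le_mul_of_nonneg_right (min_le_right _ _) (hnonneg x))
        _ < ⊤ := by
            have hI : Integrable fun x : ℝ => (n : ℝ) * h x := hint.const_mul _
            exact (hasFiniteIntegral_iff_ofReal
              (ae_of_all _ fun x => mul_nonneg (Nat.cast_nonneg n) (hnonneg x))).mp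
              hI.hasFiniteIntegral
    have hdiffm : Measurable fun x : ℝ => h x - h (x + a) :=
      hmeas.sub (hmeas.comp (measurable_add_const a))
    have hFm : Measurable F := hFmono.measurable
    have htend : Filter.Tendsto (fun n : ℕ => ∫ x : ℝ, min (F (h x)) (n : ℝ) * (h x - h (x + a)))
        Filter.atTop (nhds (∫ x : ℝ, F (h x) * (h x - h (x + a)))) := by
      refine tendsto_integral_of_dominated_convergence
        (fun x => F (h x) * |h x - h (x + a)|)
        (fun n => (((hFm.comp hmeas).min measurable_const).mul hdiffm).aestronglyMeasurable)
        ?_ ?_ ?_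
      · -- bound integrable
        have : (fun x => F (h x) * |h x - h (x + a)|)
            = fun x => |F (h x) * (h x - h (x + a))| := by
          funext x
          rw [abs_mul, abs_of_nonneg (hFnonneg _)]
        rw [this]
        exact hg.abs
      · intro n
        refine ae_of_all _ fun x => ?_
        rw [Real.norm_eq_abs, abs_mul,
          abs_of_nonneg (le_min (hFnonneg _) (Nat.cast_nonneg n))]
        exact mul_le_mul_of_nonneg_right (min_le_left _ _) (abs_nonneg _)
      · refine ae_of_all _ fun x => ?_
        refine Filter.Tendsto.mul_const _ ?_
        refine tendsto_atTop_of_eventually_const (i₀ := ⌈F (h x)⌉₊) fun n hn => ?_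
        exact min_eq_left (le_trans (Nat.le_ceil _) (Nat.cast_le.mpr hn))
    exact ge_of_tendsto htend (Filter.Eventually.of_forall heach)
  · rw [integral_undef hg]
end

section
/- Let γ : ℝ → [0,∞) be non-decreasing on (−∞, 0], supported in (−∞, 0], integrable with ∫γ = 1, of bounded variation, and with γ'(s) > 0 for a.e. s < 0. Suppose g_ε : (−∞,0] → [0, C₁] are measurable functions (ε > 0) satisfying ∫_{−∞}^0 g_ε(s)γ'(s) ds ≤ C₀ε. Then ∫_{−∞}^0 g_ε(s)γ(s) ds → 0 as ε → 0. -/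
open MeasureTheory Set Filter

theorem stmt_15 (γ : ℝ → ℝ) (g : ℝ → ℝ → ℝ) (C₀ C₁ : ℝ)
    (hC₀ : 0 < C₀) (hC₁ : 0 < C₁)
    (hγ0 : ∀ s, 0 ≤ γ s)
    (hγmono : MonotoneOn γ (Set.Iic 0))
    (hγsupp : Function.support γ ⊆ Set.Iic 0)
    (hγint : Integrable γ)
    (hγ1 : (∫ s : ℝ, γ s) = 1)
    (hγBV : BoundedVariationOn γ Set.univ)
    (hγderiv : ∀ᵐ s : ℝ, s < 0 → HasDerivAt γ (deriv γ s) s)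
    (hγ'pos : ∀ᵐ s : ℝ, s < 0 → 0 < deriv γ s)
    (hgmeas : ∀ ε > (0:ℝ), Measurable (g ε))
    (hgrange : ∀ ε > (0:ℝ), ∀ s ≤ (0:ℝ), g ε s ∈ Set.Icc 0 C₁)
    (hgint : ∀ ε > (0:ℝ), IntegrableOn (fun s => g ε s * deriv γ s) (Set.Iic 0))
    (hdiss : ∀ ε > (0:ℝ), (∫ s in Set.Iic (0:ℝ), g ε s * deriv γ s) ≤ C₀ * ε) :
    Tendsto (fun ε => ∫ s in Set.Iic (0:ℝ), g ε s * γ s)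
      (nhdsWithin 0 (Set.Ioi 0)) (nhds 0) := by
  -- good sets
  set B : ℕ → Set ℝ := fun n => Icc (-(n:ℝ)) 0 ∩ {s | 1/((n:ℝ)+1) ≤ deriv γ s} with hB
  have hBmeas : ∀ n, MeasurableSet (B n) := fun n =>
    measurableSet_Icc.inter (measurableSet_le measurable_const (measurable_deriv γ))
  have hBsub : ∀ n, B n ⊆ Iic (0:ℝ) := fun n s hs => hs.1.2
  have hne0 : ∀ᵐ s : ℝ, s ≠ (0:ℝ) := by
    rw [ae_iff]
    simp only [ne_eq, not_not]
    have : {x : ℝ | x = 0} = {(0:ℝ)} := by ext x; simp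
    rw [this]; exact measure_singleton 0
  -- convergence of tails
  have htail : Tendsto (fun n : ℕ => ∫ s in Iic (0:ℝ) \ B n, γ s) atTop (nhds 0) := by
    have := MeasureTheory.tendsto_integral_of_dominated_convergence
      (F := fun n : ℕ => (Iic (0:ℝ) \ B n).indicator γ) (f := fun _ => (0:ℝ))
      (bound := γ) (μ := (volume : Measure ℝ))
      (fun n => hγint.aestronglyMeasurable.indicator (measurableSet_Iic.diff (hBmeas n)))
      hγint
      (fun n => Filter.Eventually.of_forall fun s => by
        by_cases hs : s ∈ Iic (0:ℝ) \ B n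
        · simp [Set.indicator_of_mem hs, abs_of_nonneg (hγ0 s)]
        · simp [Set.indicator_of_notMem hs, hγ0 s])
      ?_
    · rw [MeasureTheory.integral_zero] at this
      convert this using 2 with n
      exact (MeasureTheory.integral_indicator (measurableSet_Iic.diff (hBmeas n))).symm
    · filter_upwards [hγ'pos, hne0] with s hpos hs0
      by_cases hs : s < 0
      · have hd := hpos hs
        have : ∀ᶠ n : ℕ in atTop, (Iic (0:ℝ) \ B n).indicator γ s = 0 := by
          obtain ⟨n₁, hn₁⟩ := exists_nat_ge (-s)
          obtain ⟨n₂, hn₂⟩ := exists_nat_gt (1 / deriv γ s)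
          filter_upwards [Filter.eventually_ge_atTop (max n₁ n₂)] with n hn
          have h1 : -(n:ℝ) ≤ s := by
            have : (n₁:ℝ) ≤ (n:ℝ) := Nat.cast_le.2 (le_trans (le_max_left _ _) hn)
            linarith
          have h2 : 1/((n:ℝ)+1) ≤ deriv γ s := by
            have hn2 : (n₂:ℝ) ≤ (n:ℝ) := Nat.cast_le.2 (le_trans (le_max_right _ _) hn)
            have : 1 / deriv γ s < (n:ℝ) + 1 := by linarith
            rw [div_le_iff₀ (by positivity)]
            rw [div_lt_iff₀ hd] at this
            nlinarith
          have : s ∈ B n := ⟨⟨h1, le_of_lt hs⟩, h2⟩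
          exact Set.indicator_of_notMem (fun h => h.2 this) γ
        exact Tendsto.congr' (by filter_upwards [this] with n h; exact h.symm) tendsto_const_nhds
      · have hs' : s ∉ Iic (0:ℝ) := by
          intro h; exact hs (lt_of_le_of_ne h hs0)
        have : ∀ n : ℕ, (Iic (0:ℝ) \ B n).indicator γ s = 0 := fun n =>
          Set.indicator_of_notMem (fun h => hs' h.1) γ
        simpa [this] using tendsto_const_nhds
  -- main estimate
  rw [Metric.tendsto_nhdsWithin_nhds]
  intro η hη
  -- choose n with small tail
  obtain ⟨n, hn⟩ := (Metric.tendsto_atTop.1 htail (η/(2*C₁)) (by positivity))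
  have htail_n : ∫ s in Iic (0:ℝ) \ B n, γ s < η/(2*C₁) := by
    have := hn n le_rfl
    rw [Real.dist_eq, sub_zero] at this
    calc ∫ s in Iic (0:ℝ) \ B n, γ s ≤ |∫ s in Iic (0:ℝ) \ B n, γ s| := le_abs_self _
      _ < η/(2*C₁) := this
  set K : ℝ := ((n:ℝ)+1) * γ 0 * C₀ with hK
  have hKnonneg : 0 ≤ K := by
    have := hγ0 0
    positivity
  refine ⟨η/(2*(K+1)), by positivity, ?_⟩
  intro ε hε hdist
  have hε0 : (0:ℝ) < ε := hε
  rw [Real.dist_eq, sub_zero] at hdist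
  have hεlt : ε < η/(2*(K+1)) := by
    calc ε ≤ |ε| := le_abs_self _
      _ < _ := hdist
  -- integrability of g ε * γ on Iic 0
  have hint_gγ : IntegrableOn (fun s => g ε s * γ s) (Iic (0:ℝ)) := by
    refine Integrable.mono ((hγint.const_mul C₁).restrict) 
      (((hgmeas ε hε0).aemeasurable.mul hγint.restrict.aemeasurable).aestronglyMeasurable) ?_
    rw [ae_restrict_iff' measurableSet_Iic]
    refine Filter.Eventually.of_forall fun s hs => ?_
    have hr := hgrange ε hε0 s hs
    rw [Real.norm_eq_abs, Real.norm_eq_abs, abs_of_nonneg (mul_nonneg hr.1 (hγ0 s)),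
      abs_of_nonneg (mul_nonneg (le_of_lt hC₁) (hγ0 s))]
    exact mul_le_mul_of_nonneg_right hr.2 (hγ0 s)
  -- split the integral
  have hsplit : ∫ s in Iic (0:ℝ), g ε s * γ s
      = (∫ s in B n, g ε s * γ s) + ∫ s in Iic (0:ℝ) \ B n, g ε s * γ s := by
    rw [← MeasureTheory.setIntegral_union (Set.disjoint_sdiff_right)
      (measurableSet_Iic.diff (hBmeas n)) (hint_gγ.mono_set (hBsub n))
      (hint_gγ.mono_set (Set.diff_subset)), Set.union_diff_cancel (hBsub n)]
  -- bound on the tail part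
  have hbound2 : ∫ s in Iic (0:ℝ) \ B n, g ε s * γ s ≤ C₁ * (∫ s in Iic (0:ℝ) \ B n, γ s) := by
    rw [← MeasureTheory.integral_const_mul]
    refine MeasureTheory.setIntegral_mono_on (hint_gγ.mono_set (Set.diff_subset))
      ((hγint.const_mul C₁).integrableOn)
      (measurableSet_Iic.diff (hBmeas n)) fun s hs => ?_
    exact mul_le_mul_of_nonneg_right (hgrange ε hε0 s hs.1).2 (hγ0 s)
  -- bound on the good part
  have hbound1 : ∫ s in B n, g ε s * γ s ≤ K * ε := by
    have step1 : ∫ s in B n, g ε s * γ s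
        ≤ ∫ s in B n, ((n:ℝ)+1) * γ 0 * (g ε s * deriv γ s) := by
      refine MeasureTheory.setIntegral_mono_on (hint_gγ.mono_set (hBsub n))
        ((((hgint ε hε0).mono_set (hBsub n)).const_mul (((n:ℝ)+1) * γ 0)))
        (hBmeas n) fun s hs => ?_
      have hs0 : s ≤ 0 := hs.1.2
      have hγle : γ s ≤ γ 0 := hγmono hs0 (le_refl (0:ℝ)) hs0
      have hdge : 1/((n:ℝ)+1) ≤ deriv γ s := hs.2
      have hγ00 : γ 0 ≤ ((n:ℝ)+1) * γ 0 * deriv γ s := by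
        have hnpos : (0:ℝ) < (n:ℝ)+1 := by positivity
        have h1 : 1 ≤ ((n:ℝ)+1) * deriv γ s := by
          rw [div_le_iff₀ hnpos] at hdge; linarith [hdge]
        nlinarith [hγ0 0]
      have hg := hgrange ε hε0 s hs0
      calc g ε s * γ s ≤ g ε s * (((n:ℝ)+1) * γ 0 * deriv γ s) :=
            mul_le_mul_of_nonneg_left (le_trans hγle hγ00) hg.1
        _ = ((n:ℝ)+1) * γ 0 * (g ε s * deriv γ s) := by ring
    have step2 : ∫ s in B n, g ε s * deriv γ s ≤ ∫ s in Iic (0:ℝ), g ε s * deriv γ s := by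
      have hf0 : ∀ᵐ s ∂(volume.restrict (Iic (0:ℝ))), 0 ≤ g ε s * deriv γ s := by
        rw [ae_restrict_iff' measurableSet_Iic]
        filter_upwards [hγ'pos, hne0] with s hpos hs0 hsIic
        have hslt : s < 0 := lt_of_le_of_ne hsIic hs0
        exact mul_nonneg (hgrange ε hε0 s hsIic).1 (le_of_lt (hpos hslt))
      exact MeasureTheory.setIntegral_mono_set (hgint ε hε0) hf0
        (HasSubset.Subset.eventuallyLE (hBsub n))
    calc ∫ s in B n, g ε s * γ s ≤ ∫ s in B n, ((n:ℝ)+1) * γ 0 * (g ε s * deriv γ s) := step1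
      _ = ((n:ℝ)+1) * γ 0 * ∫ s in B n, g ε s * deriv γ s := MeasureTheory.integral_const_mul _ _
      _ ≤ ((n:ℝ)+1) * γ 0 * (C₀ * ε) := by
          refine mul_le_mul_of_nonneg_left (le_trans step2 (hdiss ε hε0)) ?_
          have := hγ0 0; positivity
      _ = K * ε := by rw [hK]; ring
  -- nonnegativity
  have hnonneg : 0 ≤ ∫ s in Iic (0:ℝ), g ε s * γ s :=
    MeasureTheory.setIntegral_nonneg measurableSet_Iic fun s hs =>
      mul_nonneg (hgrange ε hε0 s hs).1 (hγ0 s)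
  rw [Real.dist_eq, sub_zero, abs_of_nonneg hnonneg, hsplit]
  have hc1 : K * ε ≤ (K+1) * ε := by nlinarith
  have hc2 : (K+1) * ε < η/2 := by
    have h2 : (0:ℝ) < K + 1 := by linarith
    calc (K+1)*ε < (K+1)*(η/(2*(K+1))) := by exact mul_lt_mul_of_pos_left hεlt h2
      _ = η/2 := by field_simp
  have hc3 : C₁ * (∫ s in Iic (0:ℝ) \ B n, γ s) < η/2 := by
    calc C₁ * (∫ s in Iic (0:ℝ) \ B n, γ s) < C₁ * (η/(2*C₁)) :=
          mul_lt_mul_of_pos_left htail_n hC₁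
      _ = η/2 := by field_simp
  linarith [hbound1, hbound2, hc1]
end
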